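/- If D is a countably incomplete ultrafilter on I, then every topological ultraproduct ∏_D X_i via D is a P-space: countable intersections of open sets are open. -/

import Mathlib

open Filter Topology Set

universe u v

def USetoid {I : Type u} (D : Ultrafilter I) (X : I → Type v) : Setoid (∀ i, X i) where
  r x y := ∀ᶠ i in (D : Filter I), x i = y i
  iseqv := ⟨fun _ => Filter.Eventually.of_forall fun _ => rfl,
    fun h => h.mono fun _ e => e.symm,
    fun h₁ h₂ => (h₁.and h₂).mono fun _ e => e.1.trans e.2⟩

def Uprod {I : Type u} (D : Ultrafilter I) (X : I → Type v) := Quotient (USetoid D X)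

def ultrabox {I : Type u} (D : Ultrafilter I) (X : I → Type v) (U : ∀ i, Set (X i)) :
    Set (Uprod D X) :=
  {q | ∃ x : ∀ i, X i, Quotient.mk (USetoid D X) x = q ∧ {i | x i ∈ U i} ∈ D}

def uTop {I : Type u} (D : Ultrafilter I) (X : I → Type v) [∀ i, TopologicalSpace (X i)] :
    TopologicalSpace (Uprod D X) :=
  TopologicalSpace.generateFrom
    {s | ∃ U : ∀ i, Set (X i), (∀ i, IsOpen (U i)) ∧ s = ultrabox D X U}

/-!
Take `x` in `⋂ n, U n` and basic boxes `ultrabox (V n) ∋ x` inside `U n`, so that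
`A n = {i | x i ∈ V n i} ∈ D`. Countable incompleteness lets us shrink the `A n` to sets
`B n ∈ D` such that every index lies in only finitely many `B n`. Then
`W i = ⋂ {V n i | i ∈ B n}` is a finite intersection, hence open, contains `x i`, and
`ultrabox W ⊆ ultrabox (V n)` because `W i ⊆ V n i` for `i ∈ B n`.
-/

theorem Filter.exists_pointFinite_shrink_of_iInter_eq_empty {I : Type u} {F : Filter I}
    {f : ℕ → Set I} (hf : ∀ n, f n ∈ F) (hfe : ⋂ n, f n = ∅) {A : ℕ → Set I}
    (hA : ∀ n, A n ∈ F) :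
    ∃ B : ℕ → Set I, (∀ n, B n ∈ F) ∧ (∀ n, B n ⊆ A n) ∧ ∀ i, {n | i ∈ B n}.Finite := by
  refine ⟨fun n => A n ∩ ⋂ k ∈ Iic n, f k,
    fun n => inter_mem (hA n) ((biInter_mem (finite_Iic n)).2 fun k _ => hf k),
    fun n => inter_subset_left, fun i => ?_⟩
  obtain ⟨m, him⟩ : ∃ m, i ∉ f m := by
    simpa only [mem_iInter, not_forall] using (hfe.symm ▸ notMem_empty i : i ∉ ⋂ n, f n)
  refine (finite_Iio m).subset fun n hn => ?_
  by_contra hmn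
  exact him (mem_iInter₂.1 hn.2 m (mem_Iic.2 (not_lt.1 hmn)))

section Ultraproduct

variable {I : Type u} (D : Ultrafilter I) {X : I → Type v}

def Uprod.mk (x : ∀ i, X i) : Uprod D X := Quotient.mk (USetoid D X) x

theorem Uprod.exists_rep (q : Uprod D X) : ∃ x, Uprod.mk D x = q := Quotient.exists_rep q

theorem mk_mem_ultrabox_iff (U : ∀ i, Set (X i)) (x : ∀ i, X i) :
    Uprod.mk D x ∈ ultrabox D X U ↔ {i | x i ∈ U i} ∈ D := by
  refine ⟨fun ⟨y, hyx, hyU⟩ => ?_, fun h => ⟨x, rfl, h⟩⟩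
  filter_upwards [Quotient.exact hyx, hyU] with i hi hiU
  rwa [← hi]

variable {D}

theorem ultrabox_subset_ultrabox {U V : ∀ i, Set (X i)} (h : {i | U i ⊆ V i} ∈ D) :
    ultrabox D X U ⊆ ultrabox D X V := by
  rintro _ ⟨x, rfl, hx⟩
  refine (mk_mem_ultrabox_iff D V x).2 ?_
  filter_upwards [h, hx] with i hUV hxU using hUV hxU

theorem ultrabox_inter (U V : ∀ i, Set (X i)) :
    ultrabox D X U ∩ ultrabox D X V = ultrabox D X (fun i => U i ∩ V i) := by
  ext q
  obtain ⟨x, rfl⟩ := Uprod.exists_rep D q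
  simp only [mem_inter_iff, mk_mem_ultrabox_iff, ofPred_and]
  exact inter_mem_iff.symm

variable (D X) [∀ i, TopologicalSpace (X i)]

theorem isTopologicalBasis_ultrabox :
    @TopologicalSpace.IsTopologicalBasis _ (uTop D X)
      {s | ∃ U : ∀ i, Set (X i), (∀ i, IsOpen (U i)) ∧ s = ultrabox D X U} := by
  let := uTop D X
  refine ⟨?_, ?_, rfl⟩
  · rintro _ ⟨U, hU, rfl⟩ _ ⟨V, hV, rfl⟩ q hq
    exact ⟨_, ⟨_, fun i => (hU i).inter (hV i), rfl⟩, ultrabox_inter U V ▸ hq,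
      (ultrabox_inter U V).ge⟩
  · refine sUnion_eq_univ_iff.2 fun q => ⟨_, ⟨fun _ => univ, fun _ => isOpen_univ, rfl⟩, ?_⟩
    obtain ⟨x, rfl⟩ := Uprod.exists_rep D q
    exact (mk_mem_ultrabox_iff D _ x).2 (univ_mem' fun _ => mem_univ _)

end Ultraproduct

/-- If `D` is a countably incomplete ultrafilter, then every topological
ultraproduct via `D` is a P-space: countable intersections of open sets are
open. -/
theorem countably_incomplete_ultraproduct_pspace {I : Type u} (D : Ultrafilter I)
    (hD : ∃ f : ℕ → Set I, (∀ n, f n ∈ D) ∧ ⋂ n, f n = ∅)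
    (X : I → Type u) [∀ i, TopologicalSpace (X i)]
    (U : ℕ → Set (Uprod D X)) (hU : ∀ n, IsOpen[uTop D X] (U n)) :
    IsOpen[uTop D X] (⋂ n, U n) := by
  let := uTop D X
  obtain ⟨f, hf, hfe⟩ := hD
  have hbasis := isTopologicalBasis_ultrabox D X
  rw [hbasis.isOpen_iff]
  intro q hq
  obtain ⟨x, rfl⟩ := Uprod.exists_rep D q
  choose t ht hxt htU using fun n => hbasis.isOpen_iff.1 (hU n) _ (mem_iInter.1 hq n)
  choose V hVopen htV using ht
  obtain rfl : t = fun n => ultrabox D X (V n) := funext htV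
  obtain ⟨B, hBD, hBA, hBfin⟩ := exists_pointFinite_shrink_of_iInter_eq_empty hf hfe
    fun n => (mk_mem_ultrabox_iff D _ x).1 (hxt n)
  let W : ∀ i, Set (X i) := fun i => ⋂ n ∈ {n | i ∈ B n}, V n i
  refine ⟨ultrabox D X W, ⟨W, fun i => (hBfin i).isOpen_biInter fun n _ => hVopen n i, rfl⟩,
    ?_, ?_⟩
  · exact (mk_mem_ultrabox_iff D W x).2 (univ_mem' fun i => mem_iInter₂.2 fun n hn => hBA n hn)
  · exact subset_iInter fun n =>
      (ultrabox_subset_ultrabox (mem_of_superset (hBD n) fun i hi =>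
        biInter_subset_of_mem (t := fun n => V n i) hi)).trans (htU n)
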